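/- arXiv:1708.05779 — 2 statements merged into one kernel-verified Lean document; each statement's English description precedes it below -/
import Mathlib

section
/- Let G be a graph of order n and ℓ an integer with 1 ≤ ℓ ≤ n − 2. Then G is ℓ-connected (has vertex connectivity at least ℓ) if and only if sdiam_{n−ℓ+1}(G) = n − ℓ. -/
open SimpleGraph Finset

variable {V : Type*}

/-- The Steiner distance of a vertex set `S` in `G`, valued in `ℕ∞`:
the minimum number of edges of a connected subgraph of `G` whose vertex set
contains `S`, or `⊤` if no such subgraph exists. -/
noncomputable def steinerDist' (G : SimpleGraph V) (S : Set V) : ℕ∞ :=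
  sInf {n | ∃ H : G.Subgraph, H.Connected ∧ S ⊆ H.verts ∧ (H.edgeSet.ncard : ℕ∞) = n}

/-- The Steiner `k`-diameter of `G`, valued in `ℕ∞`. -/
noncomputable def steinerDiam' [Fintype V] (G : SimpleGraph V) (k : ℕ) : ℕ∞ :=
  (Finset.powersetCard k (Finset.univ : Finset V)).sup fun S => steinerDist' G (↑S)

/-- A graph of order `n` is `ℓ`-connected if `n > ℓ` and it remains connected
after deleting any set of fewer than `ℓ` vertices. -/
def LConnected [Fintype V] (G : SimpleGraph V) (l : ℕ) : Prop :=
  l < Fintype.card V ∧ ∀ A : Set V, A.ncard < l → (G.induce (Aᶜ)).Connected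

section Aux

/-- Deleting a non-bridge edge preserves reachability. -/
private lemma reach_del {W : Type*} {G : SimpleGraph W} {u v : W}
    (h : (G \ fromEdgeSet {s(u, v)}).Reachable u v) :
    ∀ {x y : W}, G.Reachable x y → (G \ fromEdgeSet {s(u, v)}).Reachable x y := by
  intro x y hxy
  obtain ⟨p⟩ := hxy
  induction p with
  | nil => exact Reachable.refl _
  | @cons a b c hadj p ih =>
    refine Reachable.trans ?_ ih
    by_cases he : s(a, b) = s(u, v)
    · rw [Sym2.eq_iff] at he
      rcases he with ⟨rfl, rfl⟩ | ⟨rfl, rfl⟩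
      · exact h
      · exact h.symm
    · refine Adj.reachable ?_
      rw [sdiff_adj]
      exact ⟨hadj, by simp [fromEdgeSet_adj, he]⟩

/-- Every finite connected graph has a spanning tree (stated via edge counts). -/
private lemma exists_spanning_tree_aux {W : Type*} [Fintype W] :
    ∀ (n : ℕ) (G : SimpleGraph W), G.edgeSet.ncard = n → G.Connected →
      ∃ T : SimpleGraph W, T ≤ G ∧ T.Connected ∧ T.edgeSet.ncard + 1 = Fintype.card W := by
  intro n
  induction n using Nat.strong_induction_on with
  | _ n ih =>
    intro G hn hG
    by_cases hac : G.IsAcyclic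
    · refine ⟨G, le_refl _, hG, ?_⟩
      have ht : G.IsTree := ⟨hG, hac⟩
      classical
      have h1 := ht.card_edgeFinset
      have h2 : G.edgeSet.ncard = G.edgeFinset.card := by
        rw [Set.ncard_eq_toFinset_card']
        exact congrArg Finset.card (by ext; simp)
      omega
    · rw [isAcyclic_iff_forall_edge_isBridge] at hac
      push_neg at hac
      obtain ⟨e, he, hbr⟩ := hac
      induction e using Sym2.ind with
      | _ u v =>
        have huv : G.Adj u v := he
        have hreach : (G \ fromEdgeSet {s(u, v)}).Reachable u v := by
          by_contra hcon
          exact hbr hcon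
        set G' := G \ fromEdgeSet {s(u, v)} with hG'
        have hle : G' ≤ G := sdiff_le
        have hne : Nonempty W := hG.nonempty
        have hconn' : G'.Connected :=
          ⟨fun x y => reach_del hreach (hG.preconnected x y)⟩
        have hedge : G'.edgeSet = G.edgeSet \ {s(u, v)} := by
          rw [hG', edgeSet_sdiff, edgeSet_fromEdgeSet]
          ext x
          simp only [Set.mem_diff, Set.mem_singleton_iff, Set.mem_setOf_eq, not_and, not_not]
          constructor
          · rintro ⟨hx, hx2⟩
            refine ⟨hx, fun hxe => ?_⟩
            have := hx2 hxe
            subst hxe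
            exact (G.not_isDiag_of_mem_edgeSet hx) this
          · rintro ⟨hx, hx2⟩
            exact ⟨hx, fun h => absurd h hx2⟩
        have hlt : G'.edgeSet.ncard < n := by
          rw [← hn, hedge]
          exact Set.ncard_diff_singleton_lt_of_mem he (Set.toFinite _)
        obtain ⟨T, hT1, hT2, hT3⟩ := ih _ hlt G' rfl hconn'
        exact ⟨T, hT1.trans hle, hT2, hT3⟩

private lemma conn_card_le {W : Type*} [Fintype W] {G : SimpleGraph W} (h : G.Connected) :
    Fintype.card W ≤ G.edgeSet.ncard + 1 := by
  obtain ⟨T, hTG, _, hTcard⟩ := exists_spanning_tree_aux _ G rfl h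
  have : T.edgeSet.ncard ≤ G.edgeSet.ncard :=
    Set.ncard_le_ncard (edgeSet_mono hTG) (Set.toFinite _)
  omega

private lemma coe_edgeSet_ncard [Fintype V] {G : SimpleGraph V} (H : G.Subgraph) :
    H.coe.edgeSet.ncard = H.edgeSet.ncard := by
  rw [← Subgraph.image_coe_edgeSet_coe,
    Set.ncard_image_of_injective _ (Sym2.map.injective Subtype.val_injective)]

private lemma subgraph_bound [Fintype V] {G : SimpleGraph V} {H : G.Subgraph}
    (h : H.Connected) : H.verts.ncard ≤ H.edgeSet.ncard + 1 := by
  have : Fintype H.verts := Fintype.ofFinite _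
  have h1 := conn_card_le h.coe
  have h2 : Fintype.card H.verts = H.verts.ncard := by
    rw [Set.ncard_eq_toFinset_card', Set.toFinset_card]
  have h3 := coe_edgeSet_ncard H
  omega

private lemma exists_good_subgraph [Fintype V] {G : SimpleGraph V} {S : Set V}
    (hconn : (G.induce S).Connected) :
    ∃ H : G.Subgraph, H.Connected ∧ H.verts = S ∧ H.edgeSet.ncard + 1 = S.ncard := by
  have : Fintype S := Fintype.ofFinite _
  obtain ⟨T, hTle, hTc, hTcard⟩ := exists_spanning_tree_aux _ (G.induce S) rfl hconn
  let H : G.Subgraph :=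
    { verts := S
      Adj := fun a b => ∃ (ha : a ∈ S) (hb : b ∈ S), T.Adj ⟨a, ha⟩ ⟨b, hb⟩
      adj_sub := by rintro a b ⟨ha, hb, hT⟩; exact hTle hT
      edge_vert := by rintro a b ⟨ha, _, _⟩; exact ha
      symm := ⟨by rintro a b ⟨ha, hb, hT⟩; exact ⟨hb, ha, hT.symm⟩⟩ }
  have hcoe : H.coe = T := by
    ext a b
    constructor
    · rintro ⟨ha, hb, h⟩
      exact h
    · intro h
      exact ⟨a.2, b.2, h⟩
  refine ⟨H, ?_, rfl, ?_⟩
  · rw [Subgraph.connected_iff', hcoe]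
    exact hTc
  · have h1 := coe_edgeSet_ncard H
    rw [hcoe] at h1
    have h2 : Fintype.card S = S.ncard := by
      rw [Set.ncard_eq_toFinset_card', Set.toFinset_card]
    omega

private lemma dist_lb [Fintype V] {G : SimpleGraph V} {S : Set V} {k : ℕ}
    (hk : S.ncard = k) :
    ∀ m ∈ {n | ∃ H : G.Subgraph, H.Connected ∧ S ⊆ H.verts ∧ (H.edgeSet.ncard : ℕ∞) = n},
      ((k - 1 : ℕ) : ℕ∞) ≤ m := by
  rintro m ⟨H, hc, hsub, rfl⟩
  have h1 := subgraph_bound hc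
  have h2 : k ≤ H.verts.ncard := hk ▸ Set.ncard_le_ncard hsub (Set.toFinite _)
  exact Nat.cast_le.mpr (by omega)

private lemma dist_eq_iff [Fintype V] {G : SimpleGraph V} {S : Set V} {k : ℕ}
    (hk : S.ncard = k) (hk1 : 1 ≤ k) :
    steinerDist' G S = ((k - 1 : ℕ) : ℕ∞) ↔ (G.induce S).Connected := by
  constructor
  · intro h
    have hmem : ∃ H : G.Subgraph, H.Connected ∧ S ⊆ H.verts ∧ H.edgeSet.ncard = k - 1 := by
      by_contra hno
      push_neg at hno
      have hub : ((k : ℕ) : ℕ∞) ≤ steinerDist' G S := by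
        refine le_sInf ?_
        rintro m ⟨H, hc, hsub, rfl⟩
        have hlb := dist_lb hk _ ⟨H, hc, hsub, rfl⟩
        have hne : H.edgeSet.ncard ≠ k - 1 := hno H hc hsub
        have : k - 1 ≤ H.edgeSet.ncard := Nat.cast_le.mp hlb
        exact Nat.cast_le.mpr (by omega)
      rw [h] at hub
      have := Nat.cast_le.mp hub
      omega
    obtain ⟨H, hc, hsub, hcard⟩ := hmem
    have hv : H.verts = S := by
      have h1 := subgraph_bound hc
      have h2 : H.verts.ncard ≤ S.ncard := by omega
      exact (Set.eq_of_subset_of_ncard_le hsub h2 (Set.toFinite _)).symm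
    subst hv
    have hle : H.coe ≤ G.induce H.verts := fun {a b} hab => H.adj_sub hab
    exact hc.coe.mono hle
  · intro h
    obtain ⟨H, hc, hv, hcard⟩ := exists_good_subgraph h
    refine le_antisymm ?_ (le_sInf (dist_lb hk))
    refine sInf_le ⟨H, hc, hv ▸ subset_rfl, ?_⟩
    rw [hk] at hcard
    have : H.edgeSet.ncard = k - 1 := by omega
    rw [this]

private lemma induce_superset_conn [Fintype V] {G : SimpleGraph V} {k : ℕ}
    (hall : ∀ F : Finset V, F.card = k → (G.induce (↑F : Set V)).Connected)
    (hk2 : 2 ≤ k) {B : Set V} (hB : k ≤ B.ncard) : (G.induce B).Connected := by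
  classical
  have hBf : B.Finite := Set.toFinite _
  rw [connected_iff]
  constructor
  · rintro ⟨x, hx⟩ ⟨y, hy⟩
    have hxy : ({x, y} : Finset V) ⊆ hBf.toFinset := by
      intro a ha
      rw [Set.Finite.mem_toFinset]
      rcases Finset.mem_insert.mp ha with rfl | ha
      · exact hx
      · rw [Finset.mem_singleton] at ha; subst ha; exact hy
    have hcard2 : ({x, y} : Finset V).card ≤ k :=
      le_trans (Finset.card_insert_le _ _) (by simp; omega)
    have hcardB : k ≤ hBf.toFinset.card := by
      rwa [← Set.ncard_eq_toFinset_card]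
    obtain ⟨u, hsub1, hsub2, hcard⟩ :=
      Finset.exists_subsuperset_card_eq hxy hcard2 hcardB
    have hc := hall u hcard
    have hu : (↑u : Set V) ⊆ B := by
      intro a ha
      exact hBf.mem_toFinset.mp (hsub2 (by exact_mod_cast ha))
    let φ : G.induce (↑u : Set V) →g G.induce B :=
      ⟨fun a => ⟨a.1, hu a.2⟩, fun {a b} h => h⟩
    have hx' : x ∈ (↑u : Set V) := hsub1 (Finset.mem_insert_self _ _)
    have hy' : y ∈ (↑u : Set V) := hsub1 (by simp)
    have hr := (hc.preconnected ⟨x, hx'⟩ ⟨y, hy'⟩).map φ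
    exact hr
  · have : B.Nonempty := by
      rw [← Set.ncard_pos hBf]
      omega
    exact Set.nonempty_coe_sort.mpr this

end Aux

theorem stmt_10 [Fintype V] (G : SimpleGraph V) (l : ℕ)
    (hl : 1 ≤ l) (hl' : l ≤ Fintype.card V - 2) :
    LConnected G l ↔
      steinerDiam' G (Fintype.card V - l + 1) = ((Fintype.card V - l : ℕ) : ℕ∞) := by
  classical
  set n := Fintype.card V with hn
  have hn2 : l + 2 ≤ n := by omega
  set k := n - l + 1 with hk
  have hk1 : 3 ≤ k := by omega
  have hkn : k ≤ n := by omega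
  have hk1' : k - 1 = n - l := by omega
  have hcompl : ∀ A : Set V, A.ncard + Aᶜ.ncard = n := by
    intro A
    rw [Set.ncard_add_ncard_compl, Nat.card_eq_fintype_card]
  -- Step 1 : LConnected ↔ all k-subsets induce connected graphs
  have step1 : LConnected G l ↔
      ∀ F : Finset V, F.card = k → (G.induce (↑F : Set V)).Connected := by
    constructor
    · rintro ⟨-, h⟩ F hF
      have h1 : ((↑F : Set V)ᶜ).ncard < l := by
        have := hcompl ((↑F : Set V)ᶜ)
        rw [compl_compl, Set.ncard_coe_finset, hF] at this
        omega
      have := h _ h1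
      rwa [compl_compl] at this
    · intro h
      refine ⟨by omega, fun A hA => ?_⟩
      refine induce_superset_conn h (by omega) ?_
      have := hcompl A
      omega
  -- Step 2 : each k-subset's Steiner distance
  have step2 : ∀ F : Finset V, F ∈ Finset.powersetCard k (Finset.univ : Finset V) →
      (steinerDist' G (↑F : Set V) = ((k - 1 : ℕ) : ℕ∞) ↔
        (G.induce (↑F : Set V)).Connected) := by
    intro F hF
    rw [Finset.mem_powersetCard] at hF
    exact dist_eq_iff (by rw [Set.ncard_coe_finset, hF.2]) (by omega)
  have hne : (Finset.powersetCard k (Finset.univ : Finset V)).Nonempty := by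
    rw [Finset.powersetCard_nonempty, Finset.card_univ]
    exact hkn
  rw [step1]
  rw [show ((Fintype.card V - l : ℕ) : ℕ∞) = ((k - 1 : ℕ) : ℕ∞) by rw [hk1']]
  unfold steinerDiam'
  constructor
  · intro h
    have heq : ∀ F ∈ Finset.powersetCard k (Finset.univ : Finset V),
        steinerDist' G (↑F : Set V) = ((k - 1 : ℕ) : ℕ∞) := by
      intro F hF
      exact (step2 F hF).mpr (h F (Finset.mem_powersetCard.mp hF).2)
    calc (Finset.powersetCard k (Finset.univ : Finset V)).sup
          (fun S => steinerDist' G (↑S : Set V))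
        = (Finset.powersetCard k (Finset.univ : Finset V)).sup
          (fun _ => ((k - 1 : ℕ) : ℕ∞)) := Finset.sup_congr rfl heq
      _ = ((k - 1 : ℕ) : ℕ∞) := Finset.sup_const hne _
  · intro h F hF
    have hF' : F ∈ Finset.powersetCard k (Finset.univ : Finset V) :=
      Finset.mem_powersetCard.mpr ⟨Finset.subset_univ _, hF⟩
    refine (step2 F hF').mp ?_
    have hFk : (↑F : Set V).ncard = k := by
      rw [Set.ncard_coe_finset, hF]
    refine le_antisymm ?_ (le_sInf (dist_lb hFk))
    rw [← h]
    exact Finset.le_sup (α := ℕ∞) (f := fun S : Finset V => steinerDist' G (↑S : Set V)) hF'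
end

section
/- Let G be a connected graph of order n ≥ 3. Then sdiam_{n−1}(G) = n − 2 if and only if G is 2-connected, and sdiam_{n−1}(G) = n − 1 if and only if G has at least one cut vertex. -/
open SimpleGraph Finset

variable {V : Type*}

/-- The Steiner distance of a vertex set `S` in `G`: the minimum number of edges
of a connected subgraph of `G` whose vertex set contains `S`. -/
noncomputable def steinerDist (G : SimpleGraph V) (S : Set V) : ℕ :=
  sInf {n | ∃ H : G.Subgraph, H.Connected ∧ S ⊆ H.verts ∧ H.edgeSet.ncard = n}

/-- The Steiner `k`-diameter of `G`: the maximum Steiner distance among `k`-subsets. -/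
noncomputable def steinerDiam [Fintype V] (G : SimpleGraph V) (k : ℕ) : ℕ :=
  (Finset.powersetCard k (Finset.univ : Finset V)).sup fun S => steinerDist G (↑S)

/-- A cut vertex of a connected graph: a vertex whose removal disconnects the graph. -/
def IsCutVertex (G : SimpleGraph V) (v : V) : Prop :=
  ¬ (G.induce {u | u ≠ v}).Connected

/-- A graph is 2-connected if it has at least 3 vertices and remains connected
after the deletion of any set of fewer than 2 vertices. -/
def TwoConnected [Fintype V] (G : SimpleGraph V) : Prop :=
  3 ≤ Fintype.card V ∧ ∀ A : Set V, A.ncard < 2 → (G.induce (Aᶜ)).Connected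


section Aux
variable {W : Type*}

lemma connected_delete_nonbridge (G' : SimpleGraph W) (h : G'.Connected) {u v : W}
    (hr : (G' \ fromEdgeSet {s(u, v)}).Reachable u v) :
    (G' \ fromEdgeSet {s(u, v)}).Connected := by
  rw [connected_iff]
  refine ⟨fun a b => ?_, h.nonempty⟩
  obtain ⟨p⟩ := h.preconnected a b
  induction p with
  | nil => rfl
  | @cons x y z hadj q ih =>
    refine Reachable.trans ?_ ih
    by_cases hcase : s(x, y) = s(u, v)
    · rw [Sym2.eq_iff] at hcase
      rcases hcase with ⟨rfl, rfl⟩ | ⟨rfl, rfl⟩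
      · exact hr
      · exact hr.symm
    · exact Adj.reachable (by simp [hadj, hcase])

lemma cycle_edges_ne_nil {G' : SimpleGraph W} {a : W} {c : G'.Walk a a} (hc : c.IsCycle) :
    c.edges ≠ [] := by
  have h3 := hc.three_le_length
  have := c.length_edges
  intro h0
  rw [h0] at this
  simp at this
  omega

lemma exists_isTree_le_aux [Fintype W] :
    ∀ (m : ℕ) (G' : SimpleGraph W) [Fintype G'.edgeSet], G'.edgeFinset.card ≤ m →
      G'.Connected → ∃ T : SimpleGraph W, T ≤ G' ∧ T.IsTree := by
  classical
  intro m
  induction m with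
  | zero =>
    intro G' _ hc h
    refine ⟨G', le_refl _, h, fun a c hc' => ?_⟩
    refine cycle_edges_ne_nil hc' ?_
    have h1 : G'.edgeFinset = ∅ := Finset.card_eq_zero.mp (Nat.le_zero.mp hc)
    rcases List.eq_nil_or_concat c.edges with he | ⟨l, e, he⟩
    · exact he
    · exfalso
      have h2 : e ∈ G'.edgeSet := c.edges_subset_edgeSet (by simp [he])
      rw [← mem_edgeFinset, h1] at h2
      simp at h2
  | succ m ih =>
    intro G' _ hc h
    by_cases hac : G'.IsAcyclic
    · exact ⟨G', le_refl _, h, hac⟩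
    · simp only [IsAcyclic, not_forall, not_not] at hac
      obtain ⟨a, c, hcyc⟩ := hac
      obtain ⟨e, hemem⟩ := List.exists_mem_of_ne_nil _ (cycle_edges_ne_nil hcyc)
      have heG : e ∈ G'.edgeSet := c.edges_subset_edgeSet hemem
      have hnb : ¬ G'.IsBridge e := fun hb =>
        (isBridge_iff_mem_and_forall_cycle_notMem heG).mp hb c hcyc hemem
      induction e using Sym2.ind with
      | _ u v =>
      have hadj : G'.Adj u v := heG
      rw [isBridge_iff] at hnb
      push_neg at hnb
      have hconn := connected_delete_nonbridge G' h hnb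
      have hsub : (G' \ fromEdgeSet {s(u, v)}) ≤ G' := sdiff_le
      have hES : (G' \ fromEdgeSet {s(u, v)}).edgeSet = G'.edgeSet \ {s(u, v)} := by
        rw [edgeSet_sdiff, edgeSet_fromEdgeSet, edgeSet_sdiff_sdiff_isDiag]
      have hedge : (G' \ fromEdgeSet {s(u, v)}).edgeFinset.card ≤ m := by
        have h1 : (G' \ fromEdgeSet {s(u, v)}).edgeFinset ⊆ G'.edgeFinset.erase s(u, v) := by
          intro f hf
          rw [mem_edgeFinset, hES] at hf
          rw [Finset.mem_erase, mem_edgeFinset]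
          exact ⟨hf.2, hf.1⟩
        calc (G' \ fromEdgeSet {s(u, v)}).edgeFinset.card
            ≤ (G'.edgeFinset.erase s(u, v)).card := Finset.card_le_card h1
          _ = G'.edgeFinset.card - 1 := Finset.card_erase_of_mem (mem_edgeFinset.mpr heG)
          _ ≤ m := by
              have : 1 ≤ G'.edgeFinset.card := Finset.card_pos.mpr ⟨_, mem_edgeFinset.mpr heG⟩
              omega
      obtain ⟨T, hT1, hT2⟩ := ih (G' \ fromEdgeSet {s(u, v)}) hedge hconn
      exact ⟨T, le_trans hT1 hsub, hT2⟩

lemma exists_isTree_le [Fintype W] (G' : SimpleGraph W) (h : G'.Connected) :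
    ∃ T : SimpleGraph W, T ≤ G' ∧ T.IsTree := by
  classical
  exact exists_isTree_le_aux G'.edgeFinset.card G' le_rfl h

lemma tree_ncard_edges [Fintype W] {T : SimpleGraph W} (hT : T.IsTree) :
    T.edgeSet.ncard + 1 = Fintype.card W := by
  classical
  rw [← hT.card_edgeFinset, Set.ncard_eq_toFinset_card' T.edgeSet]
  congr 2

lemma card_le_edges [Fintype W] (G' : SimpleGraph W) (h : G'.Connected) :
    Fintype.card W ≤ G'.edgeSet.ncard + 1 := by
  classical
  obtain ⟨T, hle, hT⟩ := exists_isTree_le G' h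
  rw [← tree_ncard_edges hT]
  have : T.edgeSet ⊆ G'.edgeSet := edgeSet_mono hle
  have := Set.ncard_le_ncard this (G'.edgeSet.toFinite)
  omega

end Aux

section Main
variable [Fintype V] {G : SimpleGraph V}

/-- Turn a simple graph on a subtype `≤ G.induce s` into a subgraph of `G`. -/
def toSub (G : SimpleGraph V) (s : Set V) (T : SimpleGraph s) (hle : T ≤ G.induce s) :
    G.Subgraph where
  verts := s
  Adj a b := ∃ (ha : a ∈ s) (hb : b ∈ s), T.Adj ⟨a, ha⟩ ⟨b, hb⟩
  adj_sub := by rintro a b ⟨ha, hb, h⟩; exact hle h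
  edge_vert := by rintro a b ⟨ha, _, _⟩; exact ha
  symm := ⟨by rintro a b ⟨ha, hb, h⟩; exact ⟨hb, ha, h.symm⟩⟩

lemma toSub_coe (s : Set V) (T : SimpleGraph s) (hle : T ≤ G.induce s) :
    (toSub G s T hle).coe = T := by
  ext ⟨a, ha⟩ ⟨b, hb⟩
  constructor
  · rintro ⟨ha', hb', h⟩
    exact h
  · intro h
    exact ⟨ha, hb, h⟩

lemma exists_subgraph_tree {s : Set V} (hs : (G.induce s).Connected) :
    ∃ H : G.Subgraph, H.Connected ∧ H.verts = s ∧ H.edgeSet.ncard = s.ncard - 1 := by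
  classical
  haveI : Fintype ↥s := Fintype.ofFinite _
  obtain ⟨T, hle, hT⟩ := exists_isTree_le _ hs
  refine ⟨toSub G s T hle, ?_, rfl, ?_⟩
  · rw [Subgraph.connected_iff', toSub_coe s T hle]
    exact hT.isConnected
  · have h1 : (toSub G s T hle).edgeSet = Sym2.map (↑) '' T.edgeSet := by
      rw [← Subgraph.image_coe_edgeSet_coe, toSub_coe s T hle]
      rfl
    rw [h1, Set.ncard_image_of_injective _ (Sym2.map.injective Subtype.val_injective)]
    have h2 := tree_ncard_edges hT
    have h3 : s.ncard = Fintype.card ↥s := by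
      rw [Set.ncard_eq_toFinset_card', Set.toFinset_card]
    omega

lemma subgraph_edges_lower (H : G.Subgraph) (hc : H.Connected) :
    H.verts.ncard ≤ H.edgeSet.ncard + 1 := by
  classical
  haveI : Fintype ↥H.verts := Fintype.ofFinite _
  have h1 := card_le_edges H.coe hc.coe
  have h2 : H.coe.edgeSet.ncard = H.edgeSet.ncard := by
    rw [← H.image_coe_edgeSet_coe,
      Set.ncard_image_of_injective _ (Sym2.map.injective Subtype.val_injective)]
  have h3 : H.verts.ncard = Fintype.card ↥H.verts := by
    rw [Set.ncard_eq_toFinset_card', Set.toFinset_card]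
  omega




lemma compl_singleton_eq (v : V) : ({v}ᶜ : Set V) = {u | u ≠ v} := by ext; simp

lemma ncard_compl_singleton (v : V) : ({v}ᶜ : Set V).ncard = Fintype.card V - 1 := by
  classical
  rw [Set.ncard_eq_toFinset_card']
  simp [Finset.card_compl]

lemma steinerDist_of_not_cut (v : V) (hv : ¬ IsCutVertex G v) :
    steinerDist G ({v}ᶜ) = Fintype.card V - 2 := by
  have hc : (G.induce ({v}ᶜ : Set V)).Connected := by
    rw [compl_singleton_eq]; exact not_not.mp hv
  obtain ⟨H, hH, hHv, hHe⟩ := exists_subgraph_tree hc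
  have hmem : Fintype.card V - 2 ∈
      {n | ∃ H : G.Subgraph, H.Connected ∧ ({v}ᶜ : Set V) ⊆ H.verts ∧ H.edgeSet.ncard = n} := by
    refine ⟨H, hH, hHv ▸ le_refl _, ?_⟩
    rw [hHe, ncard_compl_singleton]
    omega
  refine le_antisymm (Nat.sInf_le hmem) (le_csInf ⟨_, hmem⟩ ?_)
  rintro k ⟨H', hH', hsub, rfl⟩
  have h1 : ({v}ᶜ : Set V).ncard ≤ H'.verts.ncard :=
    Set.ncard_le_ncard hsub H'.verts.toFinite
  have h2 := subgraph_edges_lower H' hH'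
  rw [ncard_compl_singleton] at h1
  omega

lemma steinerDist_of_cut (hG : G.Connected) (v : V) (hv : IsCutVertex G v) :
    steinerDist G ({v}ᶜ) = Fintype.card V - 1 := by
  have hc : (G.induce (Set.univ : Set V)).Connected :=
    ((induceUnivIso G).connected_iff).mpr hG
  obtain ⟨H, hH, hHv, hHe⟩ := exists_subgraph_tree hc
  have hmem : Fintype.card V - 1 ∈
      {n | ∃ H : G.Subgraph, H.Connected ∧ ({v}ᶜ : Set V) ⊆ H.verts ∧ H.edgeSet.ncard = n} := by
    refine ⟨H, hH, hHv ▸ Set.subset_univ _, ?_⟩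
    rw [hHe, Set.ncard_univ, Nat.card_eq_fintype_card]
  refine le_antisymm (Nat.sInf_le hmem) (le_csInf ⟨_, hmem⟩ ?_)
  rintro k ⟨H', hH', hsub, rfl⟩
  have hvmem : v ∈ H'.verts := by
    by_contra hvn
    have hEq : H'.verts = ({v}ᶜ : Set V) := by
      apply Set.Subset.antisymm _ hsub
      intro u hu
      simp only [Set.mem_compl_iff, Set.mem_singleton_iff]
      rintro rfl; exact hvn hu
    have := hH'.induce_verts
    rw [hEq, compl_singleton_eq] at this
    exact hv this
  have hEq : H'.verts = Set.univ := by
    apply Set.eq_univ_of_forall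
    intro u
    by_cases hu : u = v
    · exact hu ▸ hvmem
    · exact hsub (by simp [hu])
  have h2 := subgraph_edges_lower H' hH'
  rw [hEq, Set.ncard_univ, Nat.card_eq_fintype_card] at h2
  omega

lemma mem_powersetCard_compl [DecidableEq V] (v : V) (hn : 1 ≤ Fintype.card V) :
    ({v}ᶜ : Finset V) ∈ Finset.powersetCard (Fintype.card V - 1) (Finset.univ : Finset V) := by
  rw [Finset.mem_powersetCard]
  exact ⟨Finset.subset_univ _, by simp [Finset.card_compl]⟩

lemma exists_vertex_of_mem (S : Finset V)
    (hS : S ∈ Finset.powersetCard (Fintype.card V - 1) (Finset.univ : Finset V))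
    (hn : 1 ≤ Fintype.card V) :
    ∃ v : V, (↑S : Set V) = ({v}ᶜ : Set V) := by
  classical
  rw [Finset.mem_powersetCard] at hS
  have hcompl : Sᶜ.card = 1 := by
    rw [Finset.card_compl, hS.2]
    omega
  obtain ⟨v, hvv⟩ := Finset.card_eq_one.mp hcompl
  refine ⟨v, ?_⟩
  have : S = ({v} : Finset V)ᶜ := by
    rw [← hvv, compl_compl]
  rw [this]
  simp

lemma steinerDiam_of_cut (hG : G.Connected) (hn : 3 ≤ Fintype.card V)
    (hv : ∃ v, IsCutVertex G v) :
    steinerDiam G (Fintype.card V - 1) = Fintype.card V - 1 := by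
  classical
  obtain ⟨v, hv⟩ := hv
  refine le_antisymm (Finset.sup_le ?_) ?_
  · intro S hS
    obtain ⟨w, hw⟩ := exists_vertex_of_mem S hS (by omega)
    rw [hw]
    by_cases hcw : IsCutVertex G w
    · rw [steinerDist_of_cut hG w hcw]
    · rw [steinerDist_of_not_cut w hcw]; omega
  · calc Fintype.card V - 1 = steinerDist G (↑({v}ᶜ : Finset V) : Set V) := by
          rw [show ((↑({v}ᶜ : Finset V)) : Set V) = ({v}ᶜ : Set V) from by simp,
            steinerDist_of_cut hG v hv]
      _ ≤ _ := Finset.le_sup (f := fun S : Finset V => steinerDist G (↑S)) (mem_powersetCard_compl v (by omega))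

lemma steinerDiam_of_not_cut (hG : G.Connected) (hn : 3 ≤ Fintype.card V)
    (hv : ¬ ∃ v, IsCutVertex G v) :
    steinerDiam G (Fintype.card V - 1) = Fintype.card V - 2 := by
  classical
  push_neg at hv
  have hne : Nonempty V := Fintype.card_pos_iff.mp (by omega)
  obtain ⟨v⟩ := hne
  refine le_antisymm (Finset.sup_le ?_) ?_
  · intro S hS
    obtain ⟨w, hw⟩ := exists_vertex_of_mem S hS (by omega)
    rw [hw, steinerDist_of_not_cut w (hv w)]
  · calc Fintype.card V - 2 = steinerDist G (↑({v}ᶜ : Finset V) : Set V) := by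
          rw [show ((↑({v}ᶜ : Finset V)) : Set V) = ({v}ᶜ : Set V) from by simp,
            steinerDist_of_not_cut v (hv v)]
      _ ≤ _ := Finset.le_sup (f := fun S : Finset V => steinerDist G (↑S)) (mem_powersetCard_compl v (by omega))


lemma twoConnected_iff (hG : G.Connected) (hn : 3 ≤ Fintype.card V) :
    TwoConnected G ↔ ¬ ∃ v, IsCutVertex G v := by
  constructor
  · rintro ⟨-, h2⟩ ⟨v, hv⟩
    have := h2 {v} (by simp [Set.ncard_singleton])
    rw [compl_singleton_eq] at this
    exact hv this
  · intro h
    refine ⟨hn, fun A hA => ?_⟩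
    have hsub : A = ∅ ∨ ∃ x, A = {x} :=
      (Set.ncard_le_one_iff_eq A.toFinite).mp (by omega)
    rcases hsub with rfl | ⟨v, rfl⟩
    · rw [Set.compl_empty]
      exact ((induceUnivIso G).connected_iff).mpr hG
    · push_neg at h
      have hv := h v
      rw [IsCutVertex, not_not, ← compl_singleton_eq] at hv
      exact hv


end Main

theorem stmt_12 [Fintype V] (G : SimpleGraph V) (hG : G.Connected)
    (hn : 3 ≤ Fintype.card V) :
    (steinerDiam G (Fintype.card V - 1) = Fintype.card V - 2 ↔ TwoConnected G) ∧
    (steinerDiam G (Fintype.card V - 1) = Fintype.card V - 1 ↔ ∃ v, IsCutVertex G v) := by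
  by_cases hcut : ∃ v, IsCutVertex G v
  · have hd := steinerDiam_of_cut hG hn hcut
    refine ⟨⟨fun h => absurd (h ▸ hd) (by omega), fun h2 => ?_⟩, ⟨fun _ => hcut, fun _ => hd⟩⟩
    exact absurd hcut ((twoConnected_iff hG hn).mp h2)
  · have hd := steinerDiam_of_not_cut hG hn hcut
    exact ⟨⟨fun _ => (twoConnected_iff hG hn).mpr hcut, fun _ => hd⟩,
      ⟨fun h => absurd (h ▸ hd) (by omega), fun h => absurd h hcut⟩⟩
end
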